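/- arXiv:2505.02614 — 6 statements merged into one kernel-verified Lean document; each statement's English description precedes it below -/
import Mathlib

section
/- (Generalized Pinsker inequality) For every x ∈ ℝ^n_+ and y ∈ ℝ^n_{++}, D_h(x,y) ≥ (1/2)·‖x−y‖₁² / max{‖x‖₁, ‖y‖₁}. -/
/-!
With `klFun t = t log t + 1 - t`, the coordinate terms of `D_h` are `y_i klFun (x_i / y_i)`, and the
scalar inequality `(3/2)(t - 1)² ≤ (t + 2) klFun t` (for `t ≥ 0`) gives
`(x_i - y_i)² / s_i ≤ 2 y_i klFun (x_i / y_i)` with weights `s_i = (x_i + 2 y_i) / 3`.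
Cauchy–Schwarz in Sedrakyan's form bounds `‖x - y‖₁² / ∑ s_i` by the sum of these terms, and
`∑ s_i = (‖x‖₁ + 2‖y‖₁) / 3 ≤ max ‖x‖₁ ‖y‖₁`.
The scalar inequality holds because the derivative of `(t + 2) klFun t - (3/2)(t - 1)²` is
`2((t + 1) log t - 2(t - 1))`, which is increasing in `t` (as `log t ≥ 1 - 1/t`) and vanishes at `1`.
-/

open Finset Filter

/-- Bregman divergence generated by the negative entropy
`h(x) = ∑ i, x i * (log (x i) - 1)` (with the convention `0 * log 0 = 0`,
which holds automatically since `Real.log 0 = 0`). -/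
noncomputable def Dh {n : ℕ} (x y : Fin n → ℝ) : ℝ :=
  ∑ i, (x i * Real.log (x i / y i) - x i + y i)

/-- ℓ₁-norm of a vector. -/
noncomputable def l1 {n : ℕ} (x : Fin n → ℝ) : ℝ := ∑ i, |x i|

open Real InformationTheory

lemma monotoneOn_add_one_mul_log_sub_two_mul_sub_one :
    MonotoneOn (fun t : ℝ => (t + 1) * log t - 2 * (t - 1)) (Set.Ioi 0) := by
  have hderiv : ∀ t ∈ Set.Ioi (0 : ℝ), HasDerivAt (fun t : ℝ => (t + 1) * log t - 2 * (t - 1))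
      (log t + (t + 1) * t⁻¹ - 2) t := fun t ht => by
    simpa using (((hasDerivAt_id t).add_const 1).mul (hasDerivAt_log (ne_of_gt ht))).fun_sub
      (((hasDerivAt_id t).sub_const 1).const_mul 2)
  refine monotoneOn_of_hasDerivWithinAt_nonneg (convex_Ioi 0)
    (fun t ht => (hderiv t ht).continuousAt.continuousWithinAt)
    (fun t ht => (hderiv t (interior_subset ht)).hasDerivWithinAt) fun t ht => ?_
  rw [interior_Ioi] at ht
  have hlog := one_sub_inv_le_log_of_pos ht
  have : (t + 1) * t⁻¹ = 1 + t⁻¹ := by rw [add_mul, one_mul, mul_inv_cancel₀ (ne_of_gt ht)]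
  linarith

lemma two_mul_sub_one_le_add_one_mul_log {t : ℝ} (ht : 1 ≤ t) :
    2 * (t - 1) ≤ (t + 1) * log t := by
  have := monotoneOn_add_one_mul_log_sub_two_mul_sub_one (Set.mem_Ioi.2 one_pos)
    (Set.mem_Ioi.2 (one_pos.trans_le ht)) ht
  simpa only [log_one, mul_zero, sub_self, sub_nonneg] using this

lemma add_one_mul_log_le_two_mul_sub_one {t : ℝ} (h0 : 0 < t) (h1 : t ≤ 1) :
    (t + 1) * log t ≤ 2 * (t - 1) := by
  have := monotoneOn_add_one_mul_log_sub_two_mul_sub_one h0 (Set.mem_Ioi.2 one_pos) h1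
  simpa only [log_one, mul_zero, sub_self, tsub_le_iff_right, zero_add] using this

lemma three_halves_mul_sq_sub_one_le_mul_klFun {t : ℝ} (ht : 0 ≤ t) :
    3 / 2 * (t - 1) ^ 2 ≤ (t + 2) * klFun t := by
  set H : ℝ → ℝ := fun t => (t + 2) * klFun t - 3 / 2 * (t - 1) ^ 2
  have hderiv : ∀ t ≠ 0, HasDerivAt H (2 * ((t + 1) * log t - 2 * (t - 1))) t := fun t ht => by
    refine ((((hasDerivAt_id' t).add_const 2).fun_mul (hasDerivAt_klFun ht)).fun_sub
      ((((hasDerivAt_id' t).sub_const 1).fun_pow 2).const_mul (3 / 2 : ℝ))).congr_deriv ?_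
    rw [klFun_apply]
    push_cast
    ring
  have hcont : Continuous H := by fun_prop
  have hmin : IsMinOn H (Set.Ici 0) 1 := by
    refine isMinOn_Ici_of_deriv hcont.continuousAt hcont.continuousAt
      (fun t ht => (hderiv t ht.1.ne').differentiableAt.differentiableWithinAt)
      (fun t ht => (hderiv t (ne_of_gt (one_pos.trans ht))).differentiableAt.differentiableWithinAt)
      (fun t ht => ?_) (fun t ht => ?_)
    · rw [(hderiv t ht.1.ne').deriv]
      have := add_one_mul_log_le_two_mul_sub_one ht.1 ht.2.le
      linarith
    · have ht' : 1 < t := ht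
      rw [(hderiv t (by linarith)).deriv]
      have := two_mul_sub_one_le_add_one_mul_log ht'.le
      linarith
  have h1 : H 1 = 0 := by simp [H, klFun_one]
  simpa only [h1, H, sub_nonneg, Set.mem_ofPred_eq] using hmin ht

lemma mul_klFun_div {a b : ℝ} (hb : b ≠ 0) : b * klFun (a / b) = a * log (a / b) - a + b := by
  rw [klFun_apply]
  field_simp
  ring

lemma sq_sub_div_le_two_mul_mul_log_div_sub_add {a b : ℝ} (ha : 0 ≤ a) (hb : 0 < b) :
    (a - b) ^ 2 / ((a + 2 * b) / 3) ≤ 2 * (a * log (a / b) - a + b) := by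
  have key := mul_le_mul_of_nonneg_left
    (three_halves_mul_sq_sub_one_le_mul_klFun (div_nonneg ha hb.le)) (sq_nonneg b)
  rw [div_le_iff₀ (by positivity), ← mul_klFun_div hb.ne']
  have e1 : b ^ 2 * (3 / 2 * (a / b - 1) ^ 2) = 3 / 2 * (a - b) ^ 2 := by field_simp
  have e2 : b ^ 2 * ((a / b + 2) * klFun (a / b)) = (a + 2 * b) * (b * klFun (a / b)) := by
    field_simp
  rw [e1, e2] at key
  linarith

lemma l1_eq_sum_of_nonneg {n : ℕ} {x : Fin n → ℝ} (hx : ∀ i, 0 ≤ x i) : l1 x = ∑ i, x i :=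
  Finset.sum_congr rfl fun i _ => abs_of_nonneg (hx i)

theorem sq_l1_sub_div_le_two_mul_Dh {n : ℕ} {x y : Fin n → ℝ}
    (hx : ∀ i, 0 ≤ x i) (hy : ∀ i, 0 < y i) :
    l1 (x - y) ^ 2 / ((l1 x + 2 * l1 y) / 3) ≤ 2 * Dh x y := by
  have hs : ∀ i ∈ univ, 0 < (x i + 2 * y i) / 3 := fun i _ => by
    linarith [hx i, hy i]
  have hsum : ∑ i, (x i + 2 * y i) / 3 = (l1 x + 2 * l1 y) / 3 := by
    rw [l1_eq_sum_of_nonneg hx, l1_eq_sum_of_nonneg fun i => (hy i).le, ← sum_div,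
      sum_add_distrib, mul_sum]
  calc l1 (x - y) ^ 2 / ((l1 x + 2 * l1 y) / 3)
      = (∑ i, |x i - y i|) ^ 2 / ∑ i, (x i + 2 * y i) / 3 := by rw [hsum]; rfl
    _ ≤ ∑ i, |x i - y i| ^ 2 / ((x i + 2 * y i) / 3) := sq_sum_div_le_sum_sq_div _ _ hs
    _ ≤ ∑ i, 2 * (x i * log (x i / y i) - x i + y i) := sum_le_sum fun i _ => by
        rw [sq_abs]; exact sq_sub_div_le_two_mul_mul_log_div_sub_add (hx i) (hy i)
    _ = 2 * Dh x y := by rw [Dh, mul_sum]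

/-- Generalized Pinsker's inequality: for every `x ∈ ℝⁿ₊` and `y ∈ ℝⁿ₊₊`,
`D_h(x,y) ≥ (1/2) ‖x - y‖₁² / max {‖x‖₁, ‖y‖₁}`. -/
theorem generalized_pinsker {n : ℕ} (x y : Fin n → ℝ)
    (hx : ∀ i, 0 ≤ x i) (hy : ∀ i, 0 < y i) :
    Dh x y ≥ (1 / 2) * (l1 (x - y)) ^ 2 / max (l1 x) (l1 y) := by
  cases isEmpty_or_nonempty (Fin n)
  · simp [Dh, l1]
  have hy1 : 0 < l1 y := by
    rw [l1_eq_sum_of_nonneg fun i => (hy i).le]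
    exact sum_pos (fun i _ => hy i) univ_nonempty
  have hmax : (l1 x + 2 * l1 y) / 3 ≤ max (l1 x) (l1 y) := by
    linarith [le_max_left (l1 x) (l1 y), le_max_right (l1 x) (l1 y)]
  have hx1 : 0 ≤ l1 x := sum_nonneg fun i _ => abs_nonneg _
  calc (1 / 2) * l1 (x - y) ^ 2 / max (l1 x) (l1 y)
      ≤ (1 / 2) * l1 (x - y) ^ 2 / ((l1 x + 2 * l1 y) / 3) :=
        div_le_div_of_nonneg_left (by positivity) (by positivity) hmax
    _ ≤ Dh x y := by
        have := sq_l1_sub_div_le_two_mul_Dh hx hy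
        rw [mul_div_assoc]
        linarith
end

section
/- For every x ∈ ℝ^n_+ and y ∈ ℝ^n_{++}, one has y_min · D_h(x,y) ≤ ‖x − y‖₂², where y_min = min_{1≤i≤n} y_i. -/
/- Each summand of `Dh x y` is `y i * klFun (x i / y i)` with `klFun t = t log t + 1 - t`, and
`klFun t ≤ (t - 1)²` on `t ≥ 0` is `log t ≤ t - 1`. Scaling by `y i ^ 2` gives
`y i · (summand) ≤ (x i - y i)²`, and `y_min ≤ y i` together with `klFun ≥ 0` finishes. -/

open Finset Filter

open InformationTheory Real

lemma klFun_le_sq_sub_one {t : ℝ} (ht : 0 ≤ t) : klFun t ≤ (t - 1) ^ 2 := by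
  rcases ht.eq_or_lt with rfl | ht
  · simp [klFun_zero]
  · have := mul_le_mul_of_nonneg_left (log_le_sub_one_of_pos ht) ht.le
    rw [klFun_apply]
    nlinarith

lemma mul_log_div_sub_add_eq_mul_klFun (a : ℝ) {b : ℝ} (hb : b ≠ 0) :
    a * log (a / b) - a + b = b * klFun (a / b) := by
  rw [klFun_apply]
  field_simp
  ring

lemma Dh_eq_sum_mul_klFun {n : ℕ} (x : Fin n → ℝ) {y : Fin n → ℝ} (hy : ∀ i, y i ≠ 0) :
    Dh x y = ∑ i, y i * klFun (x i / y i) :=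
  Finset.sum_congr rfl fun i _ ↦ mul_log_div_sub_add_eq_mul_klFun (x i) (hy i)

lemma mul_mul_klFun_div_le_sq {a b : ℝ} (ha : 0 ≤ a) (hb : 0 < b) :
    b * (b * klFun (a / b)) ≤ (a - b) ^ 2 := calc
  b * (b * klFun (a / b)) ≤ b ^ 2 * (a / b - 1) ^ 2 := by
    rw [← mul_assoc, ← sq]
    exact mul_le_mul_of_nonneg_left (klFun_le_sq_sub_one (by positivity)) (by positivity)
  _ = (a - b) ^ 2 := by field_simp

/-- For every `x ∈ ℝⁿ₊` and `y ∈ ℝⁿ₊₊`, `y_min · D_h(x,y) ≤ ‖x - y‖₂²`,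
where `y_min = min_i y i`. -/
theorem ymin_mul_Dh_le_sq_norm {n : ℕ} [NeZero n] (x y : Fin n → ℝ)
    (hx : ∀ i, 0 ≤ x i) (hy : ∀ i, 0 < y i) :
    (Finset.univ.inf' Finset.univ_nonempty y) * Dh x y ≤ ∑ i, (x i - y i) ^ 2 := by
  rw [Dh_eq_sum_mul_klFun x fun i ↦ (hy i).ne', Finset.mul_sum]
  refine Finset.sum_le_sum fun i _ ↦ ?_
  have hymin : Finset.univ.inf' Finset.univ_nonempty y ≤ y i := Finset.inf'_le _ (mem_univ i)
  calc Finset.univ.inf' Finset.univ_nonempty y * (y i * klFun (x i / y i))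
      ≤ y i * (y i * klFun (x i / y i)) :=
        mul_le_mul_of_nonneg_right hymin
          (mul_nonneg (hy i).le (klFun_nonneg (div_nonneg (hx i) (hy i).le)))
    _ ≤ (x i - y i) ^ 2 := mul_mul_klFun_div_le_sq (hx i) (hy i)
end

section
/- (Lower bound on the minimum entry given the Bregman divergence) Let x, y ∈ ℝ^n_{++}, and set x_min = min_i x_i and y_min = min_i y_i. If t ∈ (0,1] satisfies t − log t = 1 + D_h(x,y)/x_min, then y_min ≥ x_min · t. -/
open Finset Filter

/-! If `y_min < x_min · t`, look at an index `j` where `y` is minimal. The single summand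
`a log (a/b) - a + b` of `D_h(x, y)` at `j` (with `a = x j ≥ x_min`, `b = y j`) only decreases when
`a` is lowered to `x_min`, where it equals `x_min · (s - log s - 1)` for `s = b / x_min`. Since
`s < t ≤ 1` and `s ↦ s - log s` is strictly decreasing on `(0, 1]`, this exceeds
`x_min · (t - log t - 1) = D_h(x, y)`, which is absurd. -/

open Real

lemma mul_log_div_sub_add_nonneg {a b : ℝ} (ha : 0 < a) (hb : 0 < b) :
    0 ≤ a * log (a / b) - a + b := by
  have hlog : log (b / a) ≤ b / a - 1 := log_le_sub_one_of_pos (div_pos hb ha)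
  have hab : a * log (a / b) = -(a * log (b / a)) := by rw [← inv_div, log_inv, mul_neg]
  have hdiv : a * (b / a - 1) = b - a := by field_simp
  nlinarith [mul_le_mul_of_nonneg_left hlog ha.le]

lemma mul_log_div_sub_add_le_Dh {n : ℕ} {x y : Fin n → ℝ} (hx : ∀ i, 0 < x i)
    (hy : ∀ i, 0 < y i) (j : Fin n) :
    x j * log (x j / y j) - x j + y j ≤ Dh x y :=
  single_le_sum (fun i _ => mul_log_div_sub_add_nonneg (hx i) (hy i)) (mem_univ j)

lemma mul_log_div_sub_le_of_le {a b m : ℝ} (hb : 0 < b) (hbm : b ≤ m) (hma : m ≤ a) :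
    m * log (m / b) - m ≤ a * log (a / b) - a := by
  have hm : 0 < m := hb.trans_le hbm
  have hsplit : log (a / b) = log (a / m) + log (m / b) := by
    rw [← log_mul (div_pos (hm.trans_le hma) hm).ne' (div_pos hm hb).ne',
      div_mul_div_cancel₀ hm.ne']
  have hlog : 0 ≤ log (m / b) := log_nonneg ((one_le_div hb).2 hbm)
  nlinarith [mul_log_div_sub_add_nonneg (hm.trans_le hma) hm, mul_nonneg (sub_nonneg.2 hma) hlog]

lemma sub_log_lt_sub_log {s t : ℝ} (hs : 0 < s) (hst : s < t) (ht : t ≤ 1) :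
    t - log t < s - log s := by
  have ht0 : 0 < t := hs.trans hst
  have hlog : log (s / t) < s / t - 1 :=
    log_lt_sub_one_of_pos (div_pos hs ht0) ((div_lt_one ht0).2 hst).ne
  rw [log_div hs.ne' ht0.ne'] at hlog
  have hdiv : s / t - 1 ≤ s - t := by
    rw [div_sub_one ht0.ne', div_le_iff₀ ht0]
    nlinarith
  linarith

lemma mul_sub_log_sub_one_le_mul_log_div_sub_add {a b m : ℝ} (hb : 0 < b) (hbm : b ≤ m)
    (hma : m ≤ a) :
    m * (b / m - log (b / m) - 1) ≤ a * log (a / b) - a + b := by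
  have hm : 0 < m := hb.trans_le hbm
  have hbm' : m * (b / m) = b := mul_div_cancel₀ b hm.ne'
  have hlog : log (b / m) = -log (m / b) := by rw [← log_inv, inv_div]
  have := mul_log_div_sub_le_of_le hb hbm hma
  rw [hlog]
  nlinarith

/-- Lower bound on the minimum entry given the Bregman divergence:
if `x, y ∈ ℝⁿ₊₊` and `t ∈ (0,1]` satisfies `t - log t = 1 + D_h(x,y)/x_min`,
then `y_min ≥ x_min · t`. -/
theorem ymin_ge_xmin_mul_t {n : ℕ} [NeZero n] (x y : Fin n → ℝ)
    (hx : ∀ i, 0 < x i) (hy : ∀ i, 0 < y i)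
    (t : ℝ) (ht : t ∈ Set.Ioc (0 : ℝ) 1)
    (heq : t - Real.log t = 1 + Dh x y / (Finset.univ.inf' Finset.univ_nonempty x)) :
    Finset.univ.inf' Finset.univ_nonempty y ≥
      (Finset.univ.inf' Finset.univ_nonempty x) * t := by
  obtain ⟨-, ht1⟩ := ht
  set m := univ.inf' univ_nonempty x
  have hm : 0 < m := (lt_inf'_iff _).2 fun i _ => hx i
  obtain ⟨j, -, hj⟩ := exists_mem_eq_inf' univ_nonempty y
  rw [hj]
  by_contra! hlt
  have hs : y j / m < t := (div_lt_iff₀ hm).2 (by linarith)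
  have hbm : y j ≤ m := hlt.le.trans (mul_le_of_le_one_right hm.le ht1)
  refine lt_irrefl (Dh x y) ?_
  calc Dh x y = m * (t - log t - 1) := by rw [heq]; field_simp; ring
    _ < m * (y j / m - log (y j / m) - 1) := by
      gcongr m * (?_ - 1)
      exact sub_log_lt_sub_log (div_pos (hy j) hm) hs ht1
    _ ≤ x j * log (x j / y j) - x j + y j :=
      mul_sub_log_sub_one_le_mul_log_div_sub_add (hy j) hbm (inf'_le _ (mem_univ j))
    _ ≤ Dh x y := mul_log_div_sub_add_le_Dh hx hy j
end

section
/- Let x ∈ ℝ^n_{++}, g ∈ ℝ^n and α > 0 satisfy α·‖g‖_∞ ≤ 1.79, and set x⁺ = x ∘ exp(−α g) (componentwise). Then D_h(x, x⁺) ≤ α² · ∑_{i=1}^n x_i g_i². -/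
open Finset Filter

/-!
Coordinatewise, the divergence term is `x i * φ (α * g i)` with `φ t = e⁻ᵗ - 1 + t`, and
`φ t ≤ t²` as soon as `-t ≤ 1.79`, i.e. `eˢ ≤ 1 + s + s²` for `s ≤ 1.79`. For `|s| ≤ 1` this
is the standard second-order Taylor bound and for `s < -1` it is trivial; on `[1, 1.79]` it is
a numerical estimate (at `s = 1.79` the two sides differ by less than `0.01`).
-/

open Real

namespace Real

lemma exp_le_one_add_add_sq_of_le_one {s : ℝ} (hs : s ≤ 1) : exp s ≤ 1 + s + s ^ 2 := by
  rcases lt_or_ge s (-1) with hs' | hs'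
  · have : exp s ≤ 1 := exp_le_one_iff.2 (by linarith)
    nlinarith
  · have := abs_exp_sub_one_sub_id_le (abs_le.2 ⟨hs', hs⟩)
    linarith [le_abs_self (exp s - 1 - s)]

lemma exp_le_one_add_add_sq_of_one_le_of_le {s : ℝ} (h₁ : 1 ≤ s) (h₂ : s ≤ 1.79) :
    exp s ≤ 1 + s + s ^ 2 := by
  obtain ⟨t, rfl⟩ : ∃ t, s = 1 + t := ⟨s - 1, by ring⟩
  have ht₀ : 0 ≤ t := by linarith
  have ht₁ : t ≤ 0.79 := by linarith
  have hexp_t := exp_bound' ht₀ (by linarith) (n := 5) (by norm_num)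
  simp only [sum_range_succ, range_zero, sum_empty, Nat.factorial] at hexp_t
  norm_num at hexp_t
  rw [exp_add]
  nlinarith [exp_one_lt_d9, exp_pos t, pow_nonneg ht₀ 2, pow_nonneg ht₀ 3, pow_nonneg ht₀ 4,
    mul_nonneg (pow_nonneg ht₀ 4) (sub_nonneg.2 ht₁),
    mul_nonneg (pow_nonneg ht₀ 3) (sub_nonneg.2 ht₁),
    mul_nonneg (pow_nonneg ht₀ 2) (sub_nonneg.2 ht₁),
    mul_nonneg ht₀ (sub_nonneg.2 ht₁)]

lemma exp_le_one_add_add_sq {s : ℝ} (hs : s ≤ 1.79) : exp s ≤ 1 + s + s ^ 2 := by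
  rcases le_total s 1 with h | h
  · exact exp_le_one_add_add_sq_of_le_one h
  · exact exp_le_one_add_add_sq_of_one_le_of_le h hs

end Real

lemma mul_log_div_mul_exp_neg_sub_add_le {a t : ℝ} (ha : 0 < a) (ht : -t ≤ 1.79) :
    a * log (a / (a * exp (-t))) - a + a * exp (-t) ≤ a * t ^ 2 := by
  have hlog : log (a / (a * exp (-t))) = t := by
    rw [div_mul_cancel_left₀ ha.ne', ← exp_neg, neg_neg, log_exp]
  have hexp := exp_le_one_add_add_sq ht
  rw [hlog]
  nlinarith

/-- One-step bound: if `x ∈ ℝⁿ₊₊`, `α > 0` with `α ‖g‖_∞ ≤ 1.79`, and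
`x⁺ = x ∘ exp(-α g)`, then `D_h(x, x⁺) ≤ α² ∑ i, x i * (g i)²`. -/
theorem Dh_step_le {n : ℕ} [NeZero n] (x g : Fin n → ℝ) (α : ℝ)
    (hx : ∀ i, 0 < x i) (hα : 0 < α)
    (hstep : α * (Finset.univ.sup' Finset.univ_nonempty fun i => |g i|) ≤ 1.79) :
    Dh x (fun i => x i * Real.exp (-α * g i)) ≤ α ^ 2 * ∑ i, x i * (g i) ^ 2 := by
  rw [Dh, mul_sum]
  refine sum_le_sum fun i _ => ?_
  have hg : -(α * g i) ≤ 1.79 :=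
    calc -(α * g i) ≤ α * |g i| := by rw [← mul_neg]; gcongr; exact neg_le_abs _
      _ ≤ α * univ.sup' univ_nonempty fun j => |g j| := by
        gcongr; exact le_sup' (fun j => |g j|) (mem_univ i)
      _ ≤ 1.79 := hstep
  calc _ ≤ x i * (α * g i) ^ 2 := by
        simpa only [neg_mul] using mul_log_div_mul_exp_neg_sub_add_le (hx i) hg
    _ = α ^ 2 * (x i * g i ^ 2) := by ring
end

section
/- (One-step descent of entropic mirror descent with the Polyak-type stepsize) Let A ∈ ℝ^{m×n}, b ∈ ℝ^m, f(x) = (1/2)‖Ax − b‖₂², and let z ∈ S₊. Let x ∈ ℝ^n_{++} with ∇f(x) ≠ 0, set α = min{ f(x)/‖∇f(x)‖²_x , 1.79/‖∇f(x)‖_∞ } and x⁺ = x ∘ exp(−α ∇f(x)). Then D_h(z, x⁺) − D_h(z, x) ≤ −α·f(x). -/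
/-!
Writing `x⁺ = x ∘ exp v` with `v = -α ∇f(x)`, the Bregman difference is
`∑ xᵢ (exp vᵢ - 1) - ⟨v, z⟩`, which the elementary bound `exp s ≤ 1 + s + s²` (valid for
`s ≤ 1.79`, which the cap `α ≤ 1.79 / ‖∇f(x)‖_∞` guarantees) turns into at most
`α² ‖∇f(x)‖²_x - α ⟨∇f(x), x - z⟩`. Since `Az = b`, `⟨∇f(x), x - z⟩ = ‖Ax - b‖² = 2 f(x)`, and
the cap `α ≤ f(x) / ‖∇f(x)‖²_x` bounds `α² ‖∇f(x)‖²_x` by `α f(x)`.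
-/

open Finset Filter

/-- Objective `f(x) = (1/2) ‖Ax - b‖₂²`. -/
noncomputable def fobj {m n : ℕ} (A : Matrix (Fin m) (Fin n) ℝ) (b : Fin m → ℝ)
    (x : Fin n → ℝ) : ℝ := (1 / 2) * ∑ j, ((A.mulVec x - b) j) ^ 2

/-- Gradient `∇f(x) = Aᵀ (Ax - b)` of `f(x) = (1/2)‖Ax - b‖₂²`. -/
noncomputable def gradf {m n : ℕ} (A : Matrix (Fin m) (Fin n) ℝ) (b : Fin m → ℝ)
    (x : Fin n → ℝ) : Fin n → ℝ := A.transpose.mulVec (A.mulVec x - b)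

/-- Maximum norm `‖v‖_∞`. -/
noncomputable def linfty {n : ℕ} [NeZero n] (v : Fin n → ℝ) : ℝ :=
  Finset.univ.sup' Finset.univ_nonempty fun i => |v i|

/-- Weighted squared norm `‖v‖²_x = ∑ i, x i * (v i)²`. -/
noncomputable def wnormSq {n : ℕ} (x v : Fin n → ℝ) : ℝ := ∑ i, x i * (v i) ^ 2

/-- The Polyak-type stepsize `min { f(x)/‖∇f(x)‖²_x , 1.79/‖∇f(x)‖_∞ }`. -/
noncomputable def polyakStep {m n : ℕ} [NeZero n] (A : Matrix (Fin m) (Fin n) ℝ)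
    (b : Fin m → ℝ) (x : Fin n → ℝ) : ℝ :=
  min (fobj A b x / wnormSq x (gradf A b x)) (1.79 / linfty (gradf A b x))

/-- Maximum Euclidean column norm `C_A = max_j ‖A_{:j}‖₂`. -/
noncomputable def colNormMax {m n : ℕ} [NeZero n] (A : Matrix (Fin m) (Fin n) ℝ) : ℝ :=
  Finset.univ.sup' Finset.univ_nonempty fun j => Real.sqrt (∑ i, (A i j) ^ 2)

/-- The constant `1.79` sits just below the positive root `≈ 1.7933` of `exp s = 1 + s + s²`;
at `s = 1.79` the margin is only `≈ 0.005`, hence the fifth-order expansion around `1`. -/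
lemma Real.exp_le_one_add_add_sq_of_one_le {s : ℝ} (h1 : 1 ≤ s) (h2 : s ≤ 1.79) :
    Real.exp s ≤ 1 + s + s ^ 2 := by
  set t := s - 1
  have ht0 : 0 ≤ t := by linarith
  have ht1 : t ≤ 0.79 := by linarith
  have hexp_t := Real.exp_bound' ht0 (by linarith) (n := 5) (by norm_num)
  simp only [sum_range_succ, sum_range_zero, Nat.factorial, Nat.cast_ofNat] at hexp_t
  norm_num at hexp_t
  have hexp_s : Real.exp s = Real.exp 1 * Real.exp t := by rw [← Real.exp_add, add_sub_cancel]
  rw [hexp_s]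
  have he : Real.exp 1 ≤ 2.7182818286 := Real.exp_one_lt_d9.le
  have h79 := sub_nonneg.mpr ht1
  nlinarith [Real.exp_pos t, mul_nonneg ht0 h79, mul_nonneg (pow_nonneg ht0 2) h79,
    mul_nonneg (pow_nonneg ht0 3) h79, mul_nonneg (pow_nonneg ht0 4) h79]

lemma Real.exp_le_one_add_add_sq_s7 {s : ℝ} (hs : s ≤ 1.79) : Real.exp s ≤ 1 + s + s ^ 2 := by
  rcases lt_or_ge s (-1) with hneg | hge
  · nlinarith [Real.exp_le_one_iff.mpr (show s ≤ 0 by linarith)]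
  rcases le_or_gt s 1 with hle | hgt
  · have := (abs_le.mp (Real.abs_exp_sub_one_sub_id_le (abs_le.mpr ⟨hge, hle⟩))).2
    linarith
  · exact Real.exp_le_one_add_add_sq_of_one_le hgt.le hs

section Bregman

variable {n : ℕ} {x : Fin n → ℝ}

lemma Dh_mul_exp_sub_Dh (z v : Fin n → ℝ) (hx : ∀ i, 0 < x i) :
    Dh z (fun i => x i * Real.exp (v i)) - Dh z x =
      ∑ i, (x i * (Real.exp (v i) - 1) - z i * v i) := by
  rw [Dh, Dh, ← sum_sub_distrib]
  refine sum_congr rfl fun i _ => ?_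
  rcases eq_or_ne (z i) 0 with hzi | hzi
  · simp only [hzi, zero_mul, sub_zero, zero_add]
    ring
  · rw [Real.log_div hzi (mul_pos (hx i) (Real.exp_pos _)).ne', Real.log_div hzi (hx i).ne',
      Real.log_mul (hx i).ne' (Real.exp_pos _).ne', Real.log_exp]
    ring

lemma Dh_mul_exp_sub_Dh_le (z v : Fin n → ℝ) (hx : ∀ i, 0 < x i) (hv : ∀ i, v i ≤ 1.79) :
    Dh z (fun i => x i * Real.exp (v i)) - Dh z x ≤ wnormSq x v - v ⬝ᵥ (z - x) := by
  rw [Dh_mul_exp_sub_Dh z v hx, wnormSq, dotProduct, ← sum_sub_distrib]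
  refine sum_le_sum fun i _ => ?_
  have hexp := Real.exp_le_one_add_add_sq_s7 (hv i)
  calc x i * (Real.exp (v i) - 1) - z i * v i ≤ x i * (v i + v i ^ 2) - z i * v i := by
        gcongr
        · exact (hx i).le
        · linarith
    _ = x i * v i ^ 2 - v i * (z - x) i := by simp only [Pi.sub_apply]; ring

lemma wnormSq_smul (c : ℝ) (v : Fin n → ℝ) : wnormSq x (c • v) = c ^ 2 * wnormSq x v := by
  simp only [wnormSq, mul_sum, Pi.smul_apply, smul_eq_mul]
  exact sum_congr rfl fun i _ => by ring

lemma wnormSq_nonneg (hx : ∀ i, 0 ≤ x i) (v : Fin n → ℝ) : 0 ≤ wnormSq x v :=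
  sum_nonneg fun i _ => mul_nonneg (hx i) (sq_nonneg _)

end Bregman

section LeastSquares

variable {m n : ℕ} (A : Matrix (Fin m) (Fin n) ℝ) (b : Fin m → ℝ) (x : Fin n → ℝ)

lemma fobj_nonneg : 0 ≤ fobj A b x := by
  unfold fobj
  positivity

lemma gradf_dotProduct_sub {z : Fin n → ℝ} (hz : A.mulVec z = b) :
    gradf A b x ⬝ᵥ (z - x) = -2 * fobj A b x := by
  rw [gradf, Matrix.mulVec_transpose, ← Matrix.dotProduct_mulVec, Matrix.mulVec_sub, hz]
  simp only [fobj, dotProduct, Pi.sub_apply, mul_sum]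
  exact sum_congr rfl fun j _ => by ring

end LeastSquares

section PolyakStep

variable {m n : ℕ} [NeZero n] (A : Matrix (Fin m) (Fin n) ℝ) (b : Fin m → ℝ) {x : Fin n → ℝ}

lemma abs_le_linfty (v : Fin n → ℝ) (i : Fin n) : |v i| ≤ linfty v :=
  le_sup' (fun i => |v i|) (mem_univ i)

lemma linfty_nonneg (v : Fin n → ℝ) : 0 ≤ linfty v :=
  (abs_nonneg _).trans (abs_le_linfty v 0)

lemma polyakStep_nonneg (hx : ∀ i, 0 ≤ x i) : 0 ≤ polyakStep A b x :=
  le_min (div_nonneg (fobj_nonneg A b x) (wnormSq_nonneg hx _))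
    (div_nonneg (by norm_num) (linfty_nonneg _))

lemma polyakStep_mul_wnormSq_le (hx : ∀ i, 0 ≤ x i) :
    polyakStep A b x * wnormSq x (gradf A b x) ≤ fobj A b x :=
  mul_le_of_le_div₀ (fobj_nonneg A b x) (wnormSq_nonneg hx _) (min_le_left _ _)

lemma abs_polyakStep_mul_gradf_le (hx : ∀ i, 0 ≤ x i) (i : Fin n) :
    |polyakStep A b x * gradf A b x i| ≤ 1.79 := by
  rw [abs_mul, abs_of_nonneg (polyakStep_nonneg A b hx)]
  calc polyakStep A b x * |gradf A b x i|
      ≤ polyakStep A b x * linfty (gradf A b x) :=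
        mul_le_mul_of_nonneg_left (abs_le_linfty _ i) (polyakStep_nonneg A b hx)
    _ ≤ 1.79 := mul_le_of_le_div₀ (by norm_num) (linfty_nonneg _) (min_le_right _ _)

end PolyakStep

theorem one_step_descent_general {m n : ℕ} [NeZero n]
    (A : Matrix (Fin m) (Fin n) ℝ) (b : Fin m → ℝ)
    (z : Fin n → ℝ) (hzsol : A.mulVec z = b)
    (x : Fin n → ℝ) (hx : ∀ i, 0 < x i) :
    Dh z (fun i => x i * Real.exp (-(polyakStep A b x) * gradf A b x i)) - Dh z x ≤
      -(polyakStep A b x) * fobj A b x := by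
  set α := polyakStep A b x
  set g := gradf A b x
  have hx0 : ∀ i, 0 ≤ x i := fun i => (hx i).le
  have hv : ∀ i, ((-α) • g) i ≤ 1.79 := fun i => by
    simpa only [Pi.smul_apply, smul_eq_mul, neg_mul] using
      (neg_le_abs _).trans (abs_polyakStep_mul_gradf_le A b hx0 i)
  have hstep := Dh_mul_exp_sub_Dh_le z ((-α) • g) hx hv
  rw [wnormSq_smul, smul_dotProduct, gradf_dotProduct_sub A b x hzsol] at hstep
  have hαW : α * (α * wnormSq x g) ≤ α * fobj A b x :=
    mul_le_mul_of_nonneg_left (polyakStep_mul_wnormSq_le A b hx0) (polyakStep_nonneg A b hx0)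
  calc _ ≤ (-α) ^ 2 * wnormSq x g - (-α) • (-2 * fobj A b x) := hstep
    _ ≤ -α * fobj A b x := by rw [smul_eq_mul]; nlinarith

/-- One-step descent of entropic mirror descent with the Polyak-type stepsize:
with `z ∈ S₊`, `x ∈ ℝⁿ₊₊`, `∇f(x) ≠ 0`,
`α = min { f(x)/‖∇f(x)‖²_x , 1.79/‖∇f(x)‖_∞ }` and `x⁺ = x ∘ exp(-α ∇f(x))`,
one has `D_h(z, x⁺) - D_h(z, x) ≤ -α f(x)`. -/
theorem one_step_descent {m n : ℕ} [NeZero n]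
    (A : Matrix (Fin m) (Fin n) ℝ) (b : Fin m → ℝ)
    (z : Fin n → ℝ) (hz : ∀ i, 0 ≤ z i) (hzsol : A.mulVec z = b)
    (x : Fin n → ℝ) (hx : ∀ i, 0 < x i) (hgrad : gradf A b x ≠ 0) :
    Dh z (fun i => x i * Real.exp (-(polyakStep A b x) * gradf A b x i)) - Dh z x ≤
      -(polyakStep A b x) * fobj A b x :=
  one_step_descent_general A b z hzsol x hx
end

section
/- (Implicit bias of entropic mirror descent) Let A ∈ ℝ^{m×n}, b ∈ ℝ^m, f(x) = (1/2)‖Ax − b‖₂², x₀ ∈ ℝ^n_{++}, and let (x_k) be defined by x_{k+1} = x_k ∘ exp(−α_k ∇f(x_k)) for an arbitrary sequence of stepsizes α_k > 0. If (x_k) converges to some x* ∈ S₊, then D_h(x*, x₀) ≤ D_h(z, x₀) for every z ∈ S₊; that is, x* is the Bregman projection of x₀ onto S₊. -/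
open Finset Filter

/-!
For `z, w` with `A z = A w`, the difference `D_h(z, x_k) - D_h(w, x_k)` does not depend on `k`:
the update multiplies `x_k` by `exp t_k` with `t_k` in the range of `Aᵀ`, which changes the
difference by `⟪z - w, t_k⟫ = 0`. Taking `w = x*`, `D_h(x*, x_k) → 0` while `D_h(z, x_k) ≥ 0`,
so in the limit `D_h(z, x_0) - D_h(x*, x_0) ≥ 0`.
-/

open Matrix Topology InformationTheory

lemma Dh_nonneg {n : ℕ} {z y : Fin n → ℝ} (hz : ∀ i, 0 ≤ z i) (hy : ∀ i, 0 < y i) :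
    0 ≤ Dh z y := by
  refine Finset.sum_nonneg fun i _ => ?_
  have hterm : z i * Real.log (z i / y i) - z i + y i =
      y i * klFun (z i / y i) := by
    unfold klFun
    field_simp [(hy i).ne']
    ring
  rw [hterm]
  exact mul_nonneg (hy i).le (klFun_nonneg (div_nonneg (hz i) (hy i).le))

lemma Dh_self {n : ℕ} (w : Fin n → ℝ) : Dh w w = 0 := by
  refine Finset.sum_eq_zero fun i _ => ?_
  by_cases hw : w i = 0 <;> simp [hw]

lemma continuousAt_Dh_right {n : ℕ} (w : Fin n → ℝ) : ContinuousAt (Dh w) w := by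
  unfold Dh
  refine tendsto_finsetSum _ fun i _ => ?_
  by_cases hw : w i = 0
  · simpa [hw] using (continuousAt_apply i w).tendsto
  · have : ContinuousAt (fun y : Fin n → ℝ => Real.log (w i / y i)) w :=
      (continuousAt_const.div (continuousAt_apply i w) hw).log (by simpa using hw)
    exact ((continuousAt_const.mul this).sub continuousAt_const).add (continuousAt_apply i w)

lemma Dh_sub_Dh_mul_exp {n : ℕ} (z w y t : Fin n → ℝ) (hy : ∀ i, y i ≠ 0) :
    Dh z (fun i => y i * Real.exp (t i)) - Dh w (fun i => y i * Real.exp (t i)) =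
      Dh z y - Dh w y - (z - w) ⬝ᵥ t := by
  have hterm : ∀ v : Fin n → ℝ, ∀ i,
      v i * Real.log (v i / (y i * Real.exp (t i))) =
        v i * Real.log (v i / y i) - v i * t i := by
    intro v i
    by_cases hv : v i = 0
    · simp [hv]
    · rw [Real.log_div hv (mul_ne_zero (hy i) (Real.exp_pos _).ne'), Real.log_div hv (hy i),
        Real.log_mul (hy i) (Real.exp_pos _).ne', Real.log_exp]
      ring
  simp only [Dh, hterm, dotProduct, Pi.sub_apply, ← Finset.sum_sub_distrib]
  refine Finset.sum_congr rfl fun i _ => ?_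
  ring

lemma pos_of_mul_exp_update {n : ℕ} {x t : ℕ → Fin n → ℝ} (hx0 : ∀ i, 0 < x 0 i)
    (hrec : ∀ k i, x (k + 1) i = x k i * Real.exp (t k i)) : ∀ k i, 0 < x k i := by
  intro k
  induction k with
  | zero => exact hx0
  | succ k ih => intro i; rw [hrec k i]; exact mul_pos (ih i) (Real.exp_pos _)

lemma Dh_sub_Dh_eq_of_mul_exp_update {n : ℕ} {x t : ℕ → Fin n → ℝ} {z w : Fin n → ℝ}
    (hx0 : ∀ i, 0 < x 0 i) (hrec : ∀ k i, x (k + 1) i = x k i * Real.exp (t k i))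
    (horth : ∀ k, (z - w) ⬝ᵥ t k = 0) (k : ℕ) :
    Dh z (x k) - Dh w (x k) = Dh z (x 0) - Dh w (x 0) := by
  induction k with
  | zero => rfl
  | succ k ih =>
    have hstep : x (k + 1) = fun i => x k i * Real.exp (t k i) := funext (hrec k)
    rw [hstep, Dh_sub_Dh_mul_exp _ _ _ _ fun i => (pos_of_mul_exp_update hx0 hrec k i).ne',
      horth k, sub_zero, ih]

lemma dotProduct_gradf_eq_zero {m n : ℕ} {A : Matrix (Fin m) (Fin n) ℝ} {z w : Fin n → ℝ}
    (hzw : A *ᵥ z = A *ᵥ w) (b : Fin m → ℝ) (y : Fin n → ℝ) : (z - w) ⬝ᵥ gradf A b y = 0 := by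
  rw [gradf, dotProduct_mulVec, vecMul_transpose, mulVec_sub, hzw, sub_self, zero_dotProduct]

theorem implicit_bias_general {m n : ℕ}
    (A : Matrix (Fin m) (Fin n) ℝ) (b : Fin m → ℝ)
    (α : ℕ → ℝ)
    (x : ℕ → Fin n → ℝ) (hx0 : ∀ i, 0 < x 0 i)
    (hrec : ∀ k i, x (k + 1) i = x k i * Real.exp (-(α k) * gradf A b (x k) i))
    (xstar : Fin n → ℝ) (hxssol : A.mulVec xstar = b)
    (hconv : Filter.Tendsto x Filter.atTop (nhds xstar)) :
    ∀ z : Fin n → ℝ, (∀ i, 0 ≤ z i) → A.mulVec z = b →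
      Dh xstar (x 0) ≤ Dh z (x 0) := by
  intro z hz hzsol
  have horth : ∀ k, (z - xstar) ⬝ᵥ (fun i => -(α k) * gradf A b (x k) i) = 0 := fun k => by
    rw [show (fun i => -(α k) * gradf A b (x k) i) = -(α k) • gradf A b (x k) from rfl,
      dotProduct_smul, dotProduct_gradf_eq_zero (hzsol.trans hxssol.symm), smul_zero]
  have hinv := Dh_sub_Dh_eq_of_mul_exp_update hx0 hrec horth
  have hlim : Tendsto (fun k => Dh z (x k)) atTop (𝓝 (Dh z (x 0) - Dh xstar (x 0))) := by
    have hstar : Tendsto (fun k => Dh xstar (x k)) atTop (𝓝 0) :=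
      Dh_self xstar ▸ (continuousAt_Dh_right xstar).tendsto.comp hconv
    convert hstar.add_const (Dh z (x 0) - Dh xstar (x 0)) using 1
    · funext k; linarith [hinv k]
    · rw [zero_add]
  have hgap := ge_of_tendsto' hlim fun k => Dh_nonneg hz (pos_of_mul_exp_update hx0 hrec k)
  linarith

/-- Implicit bias of entropic mirror descent: if the iterates
`x_{k+1} = x_k ∘ exp(-α_k ∇f(x_k))` (with arbitrary positive stepsizes and
`x₀ ∈ ℝⁿ₊₊`) converge to some `x* ∈ S₊`, then `x*` is the Bregman projection
of `x₀` onto `S₊`, i.e. `D_h(x*, x₀) ≤ D_h(z, x₀)` for every `z ∈ S₊`. -/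
theorem implicit_bias {m n : ℕ}
    (A : Matrix (Fin m) (Fin n) ℝ) (b : Fin m → ℝ)
    (α : ℕ → ℝ) (hα : ∀ k, 0 < α k)
    (x : ℕ → Fin n → ℝ) (hx0 : ∀ i, 0 < x 0 i)
    (hrec : ∀ k i, x (k + 1) i = x k i * Real.exp (-(α k) * gradf A b (x k) i))
    (xstar : Fin n → ℝ) (hxs : ∀ i, 0 ≤ xstar i) (hxssol : A.mulVec xstar = b)
    (hconv : Filter.Tendsto x Filter.atTop (nhds xstar)) :
    ∀ z : Fin n → ℝ, (∀ i, 0 ≤ z i) → A.mulVec z = b →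
      Dh xstar (x 0) ≤ Dh z (x 0) :=
  implicit_bias_general A b α x hx0 hrec xstar hxssol hconv
end
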